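/- If f ∈ L^q(D, 𝔹) with q > 2, then T_𝔹(f) is Hölder continuous of order α = (q−2)/q on the closed unit disk, i.e., there exists C > 0 with ‖T_𝔹(f)(z) − T_𝔹(f)(w)‖_𝔹 ≤ C|z − w|^α for all z, w ∈ D̄. -/

import Mathlib

open MeasureTheory Filter Topology Set

noncomputable section

/-- The open unit disk in `ℂ`. -/
def 𝔻 : Set ℂ := Metric.ball 0 1

/-- The bicomplex norm of the bicomplex number with idempotent components `a`, `b`:
`‖p⁺a + p⁻b‖_𝔹 = √((|a|² + |b|²)/2)`. -/
def bnorm (a b : ℂ) : ℝ := Real.sqrt ((‖a‖ ^ 2 + ‖b‖ ^ 2) / 2)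

/-- The Wirtinger derivative `∂g/∂z = (1/2)(∂g/∂x − i ∂g/∂y)`. -/
def wirt (g : ℂ → ℂ) (z : ℂ) : ℂ :=
  (fderiv ℝ g z 1 - Complex.I * fderiv ℝ g z Complex.I) / 2

/-- The Wirtinger derivative `∂g/∂z̄ = (1/2)(∂g/∂x + i ∂g/∂y)`. -/
def wirtBar (g : ℂ → ℂ) (z : ℂ) : ℂ :=
  (fderiv ℝ g z 1 + Complex.I * fderiv ℝ g z Complex.I) / 2

/-- The Cauchy–Pompeiu operator `T(g)(z) = −(1/π)∬_D g(ζ)/(ζ − z)`. -/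
def T (g : ℂ → ℂ) (z : ℂ) : ℂ := -(1 / Real.pi : ℝ) • ∫ ζ in 𝔻, g ζ / (ζ - z)

/-- The plus idempotent component of the bicomplex Theodorescu operator:
`(T((g)*))*`, i.e. `z ↦ −(1/π)∬_D g(ζ)/(ζ* − z*)`. -/
def Tp (g : ℂ → ℂ) (z : ℂ) : ℂ :=
  (starRingEnd ℂ) (T (fun ζ => (starRingEnd ℂ) (g ζ)) z)

/-- The point `r e^{iθ}`. -/
def circ (r θ : ℝ) : ℂ := (r : ℂ) * Complex.exp ((θ : ℂ) * Complex.I)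

/-- Finiteness of the bicomplex Hardy `p`-norm of the function with idempotent
components `fp`, `fm`. -/
def HardyFinB (p : ℝ) (fp fm : ℂ → ℂ) : Prop :=
  ∃ M : ℝ, ∀ r ∈ Set.Ioo (0 : ℝ) 1,
    (∫ θ in Set.Ioo 0 (2 * Real.pi), bnorm (fp (circ r θ)) (fm (circ r θ)) ^ p) ≤ M

/-- `𝔹`-holomorphy (`∂̄f = 0`) of the function with idempotent components `fp`, `fm`:
the components are real-differentiable on `𝔻` and satisfy `∂f⁺/∂z = 0`, `∂f⁻/∂z̄ = 0`. -/
def BHolo (fp fm : ℂ → ℂ) : Prop :=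
  ∀ z ∈ 𝔻, DifferentiableAt ℝ fp z ∧ DifferentiableAt ℝ fm z ∧
    wirt fp z = 0 ∧ wirtBar fm z = 0

/-- Membership in the classical holomorphic Hardy space `H^p(D)`. -/
def MemHp (p : ℝ) (g : ℂ → ℂ) : Prop :=
  DifferentiableOn ℂ g 𝔻 ∧
  ∃ M : ℝ, ∀ r ∈ Set.Ioo (0 : ℝ) 1,
    (∫ θ in Set.Ioo 0 (2 * Real.pi), ‖g (circ r θ)‖ ^ p) ≤ M


open Metric Module
open scoped ENNReal

/-!
Both idempotent components of `T_𝔹 f` are (conjugates of) Cauchy–Pompeiu transforms `T g` of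
functions `g ∈ L^q(𝔻)`, so it suffices to show that such `T g` is `α`-Hölder. With `q' < 2` the
exponent conjugate to `q`, Hölder's inequality gives
`|T g z - T g w| ≤ π⁻¹ ‖g‖_q ‖1/(· - z) - 1/(· - w)‖_{L^{q'}(ℂ)}`. The substitution
`ζ = z + (w - z) η` shows that this kernel norm is `|z - w| ^ (2/q' - 1) = |z - w| ^ α` times
the `L^{q'}` norm of `1/η - 1/(η - 1)`, which is finite because `q' < 2` near the poles and
`2 q' > 2` at infinity.
-/

section PowerSingularity

variable {E : Type*} [NormedAddCommGroup E] [NormedSpace ℝ E] [FiniteDimensional ℝ E]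
  [MeasurableSpace E] [BorelSpace E] {μ : Measure E} [μ.IsAddHaarMeasure]

theorem locallyIntegrable_norm_sub_rpow_neg (hd : 1 ≤ finrank ℝ E) {s : ℝ}
    (hs : s < finrank ℝ E) (c : E) : LocallyIntegrable (fun x => ‖x - c‖ ^ (-s)) μ := by
  have h₀ : LocallyIntegrable (fun x : E => ‖x‖ ^ (-s)) μ :=
    locallyIntegrable_of_norm_le_rpow (C := 1) hd hs
      (ae_of_all _ fun x => by simp [abs_of_nonneg (Real.rpow_nonneg (norm_nonneg x) _)])
      (measurable_norm.pow_const _).aestronglyMeasurable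
  rw [← map_sub_right_eq_self μ c] at h₀
  exact (locallyIntegrable_map_homeomorph (Homeomorph.subRight c)).1 h₀

theorem integrableOn_compl_ball_norm_rpow_neg {s : ℝ} (hs : finrank ℝ E < s) :
    IntegrableOn (fun x => ‖x‖ ^ (-s)) (ball 0 1)ᶜ μ := by
  refine (((integrable_one_add_norm hs).const_mul (2 ^ s)).integrableOn).mono'
    (measurable_norm.pow_const _).aestronglyMeasurable
    ((ae_restrict_iff' measurableSet_ball.compl).2 (ae_of_all _ fun x hx => ?_))
  have hx : 1 ≤ ‖x‖ := by simpa using hx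
  have hs₀ : 0 ≤ s := (Nat.cast_nonneg _).trans hs.le
  calc ‖‖x‖ ^ (-s)‖ = 2 ^ s * (2 * ‖x‖) ^ (-s) := by
        rw [Real.norm_of_nonneg (by positivity), Real.mul_rpow zero_le_two (norm_nonneg x),
          ← mul_assoc, ← Real.rpow_add two_pos, add_neg_cancel, Real.rpow_zero, one_mul]
    _ ≤ 2 ^ s * (1 + ‖x‖) ^ (-s) := by
        gcongr 2 ^ s * ?_
        exact Real.rpow_le_rpow_of_nonpos (by positivity) (by linarith) (by linarith)

end PowerSingularity

theorem memLp_inv_sub_restrict {s : Set ℂ} (hs : Bornology.IsBounded s) (z : ℂ) {p : ℝ}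
    (hp₀ : 0 < p) (hp : p < 2) :
    MemLp (fun ζ : ℂ => (ζ - z)⁻¹) (ENNReal.ofReal p) (volume.restrict s) := by
  refine (integrable_norm_rpow_iff (by fun_prop) (by simpa using hp₀) ENNReal.ofReal_ne_top).1 ?_
  have hloc := locallyIntegrable_norm_sub_rpow_neg (μ := volume) (by simp) (s := p)
    (by simpa using hp) z
  have hnorm :
      (fun ζ : ℂ => ‖(ζ - z)⁻¹‖ ^ (ENNReal.ofReal p).toReal) = fun ζ => ‖ζ - z‖ ^ (-p) := by
    ext ζ
    rw [ENNReal.toReal_ofReal hp₀.le, norm_inv, Real.inv_rpow (norm_nonneg _),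
      Real.rpow_neg (norm_nonneg _)]
  rw [hnorm]
  exact (hloc.integrableOn_isCompact hs.isCompact_closure).mono_set subset_closure

theorem norm_inv_sub_inv_sub_one_le_of_two_le {η : ℂ} (hη : 2 ≤ ‖η‖) :
    ‖η⁻¹ - (η - 1)⁻¹‖ ≤ 2 * ‖η‖ ^ (-2 : ℝ) := by
  have hη₀ : η ≠ 0 := norm_pos_iff.1 (by linarith)
  have hη₁ : ‖η‖ / 2 ≤ ‖η - 1‖ := by
    have := norm_sub_norm_le η 1
    rw [norm_one] at this
    linarith
  have hη₁' : η - 1 ≠ 0 := norm_pos_iff.1 (by linarith)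
  rw [inv_sub_inv hη₀ hη₁', sub_sub_cancel_left, norm_div, norm_neg, norm_one, norm_mul,
    Real.rpow_neg (norm_nonneg _), Real.rpow_two]
  calc 1 / (‖η‖ * ‖η - 1‖) ≤ 1 / (‖η‖ * (‖η‖ / 2)) := by gcongr
    _ = 2 * (‖η‖ ^ 2)⁻¹ := by field_simp

theorem memLp_inv_sub_inv_sub_one {p : ℝ} (hp₁ : 1 < p) (hp₂ : p < 2) :
    MemLp (fun η : ℂ => η⁻¹ - (η - 1)⁻¹) (ENNReal.ofReal p) := by
  have hmeas : AEStronglyMeasurable (fun η : ℂ => η⁻¹ - (η - 1)⁻¹) := by fun_prop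
  refine (integrable_norm_rpow_iff hmeas (by simpa using by linarith) ENNReal.ofReal_ne_top).1 ?_
  rw [ENNReal.toReal_ofReal (by linarith), ← integrableOn_univ,
    ← union_compl_self (closedBall (0 : ℂ) 2), integrableOn_union]
  have hdim : (finrank ℝ ℂ : ℝ) = 2 := by simp
  have hmeas' : AEStronglyMeasurable (fun η : ℂ => ‖η⁻¹ - (η - 1)⁻¹‖ ^ p) :=
    (hmeas.norm.aemeasurable.pow_const p).aestronglyMeasurable
  constructor
  · have hloc (c : ℂ) : LocallyIntegrable (fun η : ℂ => ‖η - c‖ ^ (-p)) :=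
      locallyIntegrable_norm_sub_rpow_neg (by simp) (by rw [hdim]; exact hp₂) c
    refine ((((hloc 0).add (hloc 1)).integrableOn_isCompact (isCompact_closedBall 0 2)).const_mul
      (2 ^ (p - 1))).mono' hmeas'.restrict (ae_of_all _ fun η => ?_)
    have hpow := NNReal.rpow_add_le_mul_rpow_add_rpow ‖η‖₊⁻¹ ‖η - 1‖₊⁻¹ hp₁.le
    simp only [Pi.add_apply, sub_zero, Real.rpow_neg (norm_nonneg _),
      ← Real.inv_rpow (norm_nonneg _)]
    rw [Real.norm_of_nonneg (by positivity)]
    calc ‖η⁻¹ - (η - 1)⁻¹‖ ^ p ≤ (‖η‖⁻¹ + ‖η - 1‖⁻¹) ^ p := by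
          gcongr
          simpa using norm_sub_le η⁻¹ (η - 1)⁻¹
      _ ≤ _ := by exact_mod_cast hpow
  · have hsub : (closedBall (0 : ℂ) 2)ᶜ ⊆ (ball 0 1)ᶜ :=
      compl_subset_compl.2 (ball_subset_closedBall.trans (closedBall_subset_closedBall one_le_two))
    refine (((integrableOn_compl_ball_norm_rpow_neg (μ := volume) (s := 2 * p)
      (by rw [hdim]; linarith)).mono_set hsub).const_mul (2 ^ p)).mono' hmeas'.restrict
      ((ae_restrict_iff' measurableSet_closedBall.compl).2 (ae_of_all _ fun η hη => ?_))
    have hη : 2 ≤ ‖η‖ := by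
      simp only [mem_compl_iff, mem_closedBall, dist_zero_right, not_le] at hη
      exact hη.le
    rw [Real.norm_of_nonneg (by positivity)]
    calc ‖η⁻¹ - (η - 1)⁻¹‖ ^ p ≤ (2 * ‖η‖ ^ (-2 : ℝ)) ^ p := by
          gcongr
          exact norm_inv_sub_inv_sub_one_le_of_two_le hη
      _ = 2 ^ p * ‖η‖ ^ (-(2 * p)) := by
          rw [Real.mul_rpow zero_le_two (by positivity), ← Real.rpow_mul (norm_nonneg _)]
          ring_nf

theorem Complex.lintegral_comp_mul_left (F : ℂ → ℝ≥0∞) {c : ℂ} (hc : c ≠ 0) :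
    ∫⁻ η, F (c * η) = (‖c‖ₑ ^ 2)⁻¹ * ∫⁻ ζ, F ζ := by
  let L : ℂ →ₗ[ℝ] ℂ := (LinearMap.mulLeft ℂ c).restrictScalars ℝ
  have hdet : LinearMap.det L = ‖c‖ ^ 2 := by
    simp [L, LinearMap.det_restrictScalars, Algebra.norm_complex_eq, Complex.normSq_eq_norm_sq]
  have hmap := Measure.map_linearMap_addHaar_eq_smul_addHaar (μ := (volume : Measure ℂ)) (f := L)
    (by simp [hdet, hc])
  have hemb : MeasurableEmbedding L := (Homeomorph.mulLeft₀ c hc).measurableEmbedding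
  change ∫⁻ η, F (L η) = _
  rw [← hemb.lintegral_map, hmap, lintegral_smul_measure, hdet, abs_of_nonneg (by positivity),
    ENNReal.ofReal_inv_of_pos (by positivity), ENNReal.ofReal_pow (norm_nonneg _), ofReal_norm,
    smul_eq_mul]

theorem lintegral_enorm_inv_sub_inv_rpow {z w : ℂ} (hzw : z ≠ w) (p : ℝ) :
    ∫⁻ ζ : ℂ, ‖(ζ - z)⁻¹ - (ζ - w)⁻¹‖ₑ ^ p =
      ‖w - z‖ₑ ^ (2 - p) * ∫⁻ η : ℂ, ‖η⁻¹ - (η - 1)⁻¹‖ₑ ^ p := by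
  set c := w - z
  have hc : c ≠ 0 := sub_ne_zero.2 hzw.symm
  have hc₀ : ‖c‖ₑ ≠ 0 := enorm_ne_zero.2 hc
  have hc' : ‖c‖ₑ ≠ ⊤ := enorm_ne_top
  have hscale (η : ℂ) : ‖(z + c * η - z)⁻¹ - (z + c * η - w)⁻¹‖ₑ ^ p =
      ‖c‖ₑ ^ (-p) * ‖η⁻¹ - (η - 1)⁻¹‖ₑ ^ p := by
    have : z + c * η - w = c * (η - 1) := by simp only [c]; ring
    rw [this, add_sub_cancel_left, mul_inv, mul_inv, ← mul_sub, enorm_mul, enorm_inv hc,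
      ENNReal.mul_rpow_of_ne_top (by simpa using hc₀) enorm_ne_top, ENNReal.inv_rpow,
      ENNReal.rpow_neg]
  have key := Complex.lintegral_comp_mul_left (fun ζ => ‖(z + ζ - z)⁻¹ - (z + ζ - w)⁻¹‖ₑ ^ p) hc
  rw [lintegral_add_left_eq_self (fun ζ => ‖(ζ - z)⁻¹ - (ζ - w)⁻¹‖ₑ ^ p) z] at key
  simp only [hscale, lintegral_const_mul' _ _ (ENNReal.rpow_ne_top_of_ne_zero hc₀ hc')] at key
  calc ∫⁻ ζ : ℂ, ‖(ζ - z)⁻¹ - (ζ - w)⁻¹‖ₑ ^ p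
      = ‖c‖ₑ ^ (2 : ℝ) * ((‖c‖ₑ ^ 2)⁻¹ * ∫⁻ ζ : ℂ, ‖(ζ - z)⁻¹ - (ζ - w)⁻¹‖ₑ ^ p) := by
        rw [ENNReal.rpow_two, ← mul_assoc, ENNReal.mul_inv_cancel (pow_ne_zero 2 hc₀)
          (ENNReal.pow_ne_top hc'), one_mul]
    _ = ‖c‖ₑ ^ (2 - p) * ∫⁻ η : ℂ, ‖η⁻¹ - (η - 1)⁻¹‖ₑ ^ p := by
        rw [← key, ← mul_assoc, ← ENNReal.rpow_add _ _ hc₀ hc', ← sub_eq_add_neg]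

theorem eLpNorm_inv_sub_inv {z w : ℂ} (hzw : z ≠ w) {p : ℝ} (hp : 0 < p) :
    eLpNorm (fun ζ : ℂ => (ζ - z)⁻¹ - (ζ - w)⁻¹) (ENNReal.ofReal p) =
      ‖w - z‖ₑ ^ (2 / p - 1) * eLpNorm (fun η : ℂ => η⁻¹ - (η - 1)⁻¹) (ENNReal.ofReal p) := by
  have hp₀ : ENNReal.ofReal p ≠ 0 := by simpa using hp
  rw [eLpNorm_eq_lintegral_rpow_enorm_toReal hp₀ ENNReal.ofReal_ne_top,
    eLpNorm_eq_lintegral_rpow_enorm_toReal hp₀ ENNReal.ofReal_ne_top, ENNReal.toReal_ofReal hp.le,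
    lintegral_enorm_inv_sub_inv_rpow hzw, ENNReal.mul_rpow_of_nonneg _ _ (by positivity),
    ← ENNReal.rpow_mul]
  congr 2
  field_simp

theorem enorm_T_sub_T_le {q q' : ℝ} (hqq' : q.HolderConjugate q') (hq' : q' < 2) {g : ℂ → ℂ}
    (hg : MemLp g (ENNReal.ofReal q) (volume.restrict 𝔻)) (z w : ℂ) :
    ‖T g z - T g w‖ₑ ≤ ENNReal.ofReal Real.pi⁻¹ * eLpNorm g (ENNReal.ofReal q) (volume.restrict 𝔻) *
      eLpNorm (fun ζ : ℂ => (ζ - z)⁻¹ - (ζ - w)⁻¹) (ENNReal.ofReal q') := by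
  have := hqq'.ennrealOfReal
  have hD : Bornology.IsBounded 𝔻 := isBounded_ball
  have hq'₀ : 0 < q' := hqq'.symm.pos
  have hint (v : ℂ) : IntegrableOn (fun ζ => g ζ / (ζ - v)) 𝔻 := by
    simp_rw [div_eq_mul_inv]
    exact hg.integrable_mul (memLp_inv_sub_restrict hD v hq'₀ hq')
  have hk : MemLp (fun ζ : ℂ => (ζ - z)⁻¹ - (ζ - w)⁻¹) (ENNReal.ofReal q') (volume.restrict 𝔻) :=
    (memLp_inv_sub_restrict hD z hq'₀ hq').sub
      (memLp_inv_sub_restrict hD w hq'₀ hq')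
  have hdiff : T g z - T g w =
      -(1 / Real.pi : ℝ) • ∫ ζ in 𝔻, g ζ * ((ζ - z)⁻¹ - (ζ - w)⁻¹) := by
    rw [T, T, ← smul_sub, ← integral_sub (hint z) (hint w)]
    simp only [mul_sub, div_eq_mul_inv]
  calc ‖T g z - T g w‖ₑ
      ≤ ENNReal.ofReal Real.pi⁻¹ * eLpNorm (g • fun ζ : ℂ => (ζ - z)⁻¹ - (ζ - w)⁻¹) 1
          (volume.restrict 𝔻) := by
        rw [hdiff, enorm_smul, eLpNorm_one_eq_lintegral_enorm]
        gcongr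
        · simp [Real.enorm_eq_ofReal_abs, abs_of_pos Real.pi_pos,
            ENNReal.ofReal_inv_of_pos Real.pi_pos]
        · exact enorm_integral_le_lintegral_enorm _
    _ ≤ ENNReal.ofReal Real.pi⁻¹ * (eLpNorm g (ENNReal.ofReal q) (volume.restrict 𝔻) *
          eLpNorm (fun ζ : ℂ => (ζ - z)⁻¹ - (ζ - w)⁻¹) (ENNReal.ofReal q')
            (volume.restrict 𝔻)) := by
        gcongr
        exact eLpNorm_smul_le_mul_eLpNorm hk.1 hg.1
    _ ≤ _ := by
        rw [← mul_assoc]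
        gcongr
        exact Measure.restrict_le_self

theorem holderWith_T {q : ℝ} (hq : 2 < q) {g : ℂ → ℂ}
    (hg : MemLp g (ENNReal.ofReal q) (volume.restrict 𝔻)) :
    ∃ C, HolderWith C ((q - 2) / q).toNNReal (T g) := by
  have hqq' : q.HolderConjugate (q / (q - 1)) := .conjExponent (by linarith)
  have hα : (((q - 2) / q).toNNReal : ℝ) = 2 / (q / (q - 1)) - 1 := by
    rw [Real.coe_toNNReal _ (div_nonneg (by linarith) (by linarith))]
    field_simp
    ring
  set q' := q / (q - 1)
  have hq' : q' < 2 := by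
    rw [div_lt_iff₀ (by linarith)]
    linarith
  set K := eLpNorm (fun η : ℂ => η⁻¹ - (η - 1)⁻¹) (ENNReal.ofReal q')
  have hK : K ≠ ⊤ := (memLp_inv_sub_inv_sub_one hqq'.symm.lt hq').eLpNorm_ne_top
  set C := ENNReal.ofReal Real.pi⁻¹ * eLpNorm g (ENNReal.ofReal q) (volume.restrict 𝔻) * K
  have hC : C ≠ ⊤ := ENNReal.mul_ne_top (ENNReal.mul_ne_top ENNReal.ofReal_ne_top
    hg.eLpNorm_ne_top) hK
  refine ⟨C.toNNReal, fun z w => ?_⟩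
  rcases eq_or_ne z w with rfl | hzw
  · simp
  rw [ENNReal.coe_toNNReal hC, hα, edist_eq_enorm_sub, edist_comm, edist_eq_enorm_sub]
  have hT := enorm_T_sub_T_le hqq' hq' hg z w
  rw [eLpNorm_inv_sub_inv hzw hqq'.symm.pos] at hT
  refine hT.trans_eq ?_
  simp only [C]
  ring

theorem holderWith_Tp {q : ℝ} (hq : 2 < q) {g : ℂ → ℂ}
    (hg : MemLp g (ENNReal.ofReal q) (volume.restrict 𝔻)) :
    ∃ C, HolderWith C ((q - 2) / q).toNNReal (Tp g) := by
  obtain ⟨C, hC⟩ := holderWith_T hq hg.star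
  refine ⟨C, fun z w => ?_⟩
  rw [Tp, Tp, Complex.isometry_conj.edist_eq]
  exact hC z w

theorem bnorm_nonneg (a b : ℂ) : 0 ≤ bnorm a b := Real.sqrt_nonneg _

theorem bnorm_comm (a b : ℂ) : bnorm a b = bnorm b a := by
  rw [bnorm, bnorm, add_comm]

theorem norm_le_sqrt_two_mul_bnorm (a b : ℂ) : ‖a‖ ≤ √2 * ‖bnorm a b‖ := by
  rw [Real.norm_of_nonneg (bnorm_nonneg a b), bnorm, ← Real.sqrt_mul zero_le_two,
    mul_div_cancel₀ _ two_ne_zero]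
  exact Real.le_sqrt_of_sq_le (by nlinarith [sq_nonneg ‖b‖])

theorem bnorm_le_norm_add_norm (a b : ℂ) : bnorm a b ≤ ‖a‖ + ‖b‖ := by
  refine Real.sqrt_le_iff.2 ⟨by positivity, ?_⟩
  nlinarith [norm_nonneg a, norm_nonneg b]

theorem memLp_bnorm {q : ℝ} (hq : 0 < q) {fp fm : ℂ → ℂ} (hfp : Measurable fp)
    (hfm : Measurable fm) {s : Set ℂ} (hLq : IntegrableOn (fun z => bnorm (fp z) (fm z) ^ q) s) :
    MemLp (fun z => bnorm (fp z) (fm z)) (ENNReal.ofReal q) (volume.restrict s) := by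
  have hmeas : Measurable fun z => bnorm (fp z) (fm z) := by
    unfold bnorm
    fun_prop
  refine (integrable_norm_rpow_iff hmeas.aestronglyMeasurable (by simpa using hq)
    ENNReal.ofReal_ne_top).1 ?_
  simp_rw [ENNReal.toReal_ofReal hq.le, Real.norm_of_nonneg (bnorm_nonneg _ _)]
  exact hLq

/-- for `f ∈ L^q(D,𝔹)` with `q > 2`, `T_𝔹(f)` is Hölder continuous of
order `α = (q−2)/q` on the closed unit disk. -/
theorem stmt8 (q : ℝ) (hq : 2 < q) (fp fm : ℂ → ℂ)
    (hfp : Measurable fp) (hfm : Measurable fm)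
    (hLq : IntegrableOn (fun z => bnorm (fp z) (fm z) ^ q) 𝔻) :
    ∃ C : ℝ, 0 < C ∧ ∀ z ∈ Metric.closedBall (0 : ℂ) 1, ∀ w ∈ Metric.closedBall (0 : ℂ) 1,
      bnorm (Tp fp z - Tp fp w) (T fm z - T fm w) ≤
        C * ‖z - w‖ ^ ((q - 2) / q) := by
  have hq₀ : 0 < q := by linarith
  have hb := memLp_bnorm hq₀ hfp hfm hLq
  obtain ⟨Cp, hCp⟩ := holderWith_Tp hq (hb.of_le_mul hfp.aestronglyMeasurable
    (ae_of_all _ fun ζ => norm_le_sqrt_two_mul_bnorm (fp ζ) (fm ζ)))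
  obtain ⟨Cm, hCm⟩ := holderWith_T hq (hb.of_le_mul hfm.aestronglyMeasurable
    (ae_of_all _ fun ζ => bnorm_comm (fp ζ) (fm ζ) ▸ norm_le_sqrt_two_mul_bnorm (fm ζ) (fp ζ)))
  have hα : (((q - 2) / q).toNNReal : ℝ) = (q - 2) / q :=
    Real.coe_toNNReal _ (div_nonneg (by linarith) hq₀.le)
  refine ⟨Cp + Cm + 1, by positivity, fun z _ w _ => ?_⟩
  have hd := Real.rpow_nonneg (norm_nonneg (z - w)) ((q - 2) / q)
  calc bnorm (Tp fp z - Tp fp w) (T fm z - T fm w)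
      ≤ ‖Tp fp z - Tp fp w‖ + ‖T fm z - T fm w‖ := bnorm_le_norm_add_norm _ _
    _ ≤ Cp * ‖z - w‖ ^ ((q - 2) / q) + Cm * ‖z - w‖ ^ ((q - 2) / q) := by
      simpa only [dist_eq_norm, hα] using add_le_add (hCp.dist_le z w) (hCm.dist_le z w)
    _ ≤ (Cp + Cm + 1) * ‖z - w‖ ^ ((q - 2) / q) := by nlinarith
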